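/- arXiv:1507.03429 — 2 statements merged into one kernel-verified Lean document; each statement's English description precedes it below -/
import Mathlib

section
/- If F is a cumulative distribution function whose tail satisfies 1 - F(x) = x^{-1/γ} L(x) for x large, where γ > 0 and L is slowly varying, then F belongs to the domain of attraction of the Generalized Extreme Value distribution G_γ(x) = exp(-(1+γx)^{-1/γ}); that is, there exists a positive function a(t) such that (b(tx) - b(t))/a(t) → (x^γ - 1)/γ as t → ∞ for every x > 0, where b(t) = inf{y : 1/(1-F(y)) ≥ t}. -/
/-!
The tail `1 - F` is regularly varying of index `-1/γ`, so `U = 1 / (1 - F)` increases to `∞`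
and is regularly varying of index `1/γ`. Its generalized inverse `b` is then regularly varying
of index `γ`: for `k > 1` we have `t ≤ U (k b t)`, and `U (c b t) / U (k b t) → (c / k) ^ (1/γ)`,
which exceeds `x` once `c > k x ^ γ`; so `t x ≤ U (c b t)`, i.e. `b (t x) ≤ c b t`.
Hence `b (t x) / b t → x ^ γ`, and `a t = γ b t` normalises `b (t x) - b t`.
-/

open Filter Topology

def IsRegularlyVarying (f : ℝ → ℝ) (ρ : ℝ) : Prop :=
  ∀ r > (0 : ℝ), Tendsto (fun x => f (r * x) / f x) atTop (𝓝 (r ^ ρ))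

namespace IsRegularlyVarying

variable {f g : ℝ → ℝ} {ρ : ℝ}

theorem congr' (hf : IsRegularlyVarying f ρ) (hfg : f =ᶠ[atTop] g) :
    IsRegularlyVarying g ρ := by
  intro r hr
  refine (hf r hr).congr' ?_
  filter_upwards [hfg, (tendsto_id.const_mul_atTop hr).eventually hfg] with x hx hrx
  rw [hx, show f (r * x) = g (r * x) from hrx]

theorem eventually_ne_zero (hf : IsRegularlyVarying f ρ) : ∀ᶠ x in atTop, f x ≠ 0 := by
  have h : Tendsto (fun x => f x / f x) atTop (𝓝 1) := by
    simpa using hf 1 one_pos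
  filter_upwards [h.eventually_ne one_ne_zero] with x hx hfx
  simp [hfx] at hx

theorem inv (hf : IsRegularlyVarying f ρ) : IsRegularlyVarying (fun x => (f x)⁻¹) (-ρ) := by
  intro r hr
  rw [Real.rpow_neg hr.le]
  refine ((hf r hr).inv₀ (Real.rpow_pos_of_pos hr ρ).ne').congr fun x => ?_
  rw [inv_div, inv_div_inv]

theorem rpow_mul (hf : IsRegularlyVarying f 0) (ρ : ℝ) :
    IsRegularlyVarying (fun x => x ^ ρ * f x) ρ := by
  intro r hr
  have h : Tendsto (fun x => r ^ ρ * (f (r * x) / f x)) atTop (𝓝 (r ^ ρ)) := by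
    simpa using tendsto_const_nhds.mul (hf r hr)
  refine h.congr' ?_
  filter_upwards [eventually_gt_atTop 0] with x hx
  rw [Real.mul_rpow hr.le hx.le, mul_div_mul_comm,
    mul_div_cancel_right₀ _ (Real.rpow_pos_of_pos hx ρ).ne']

end IsRegularlyVarying

noncomputable def generalizedInverse (V : ℝ → ℝ) (t : ℝ) : ℝ :=
  sInf {y | t ≤ V y}

section GeneralizedInverse

variable {V : ℝ → ℝ}

theorem generalizedInverse_le (hV : Monotone V) {t y₀ y : ℝ} (ht : V y₀ < t) (hy : t ≤ V y) :
    generalizedInverse V t ≤ y := by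
  refine csInf_le ⟨y₀, fun z hz => ?_⟩ hy
  by_contra! h
  exact (ht.trans_le hz).not_ge (hV h.le)

theorem le_apply_of_generalizedInverse_lt (hV : Monotone V) {t z : ℝ} (hne : ∃ y, t ≤ V y)
    (hz : generalizedInverse V t < z) : t ≤ V z := by
  obtain ⟨y, hy, hyz⟩ := exists_lt_of_csInf_lt hne hz
  exact le_trans hy (hV hyz.le)

theorem tendsto_generalizedInverse_atTop (hV : Monotone V) (hV_top : Tendsto V atTop atTop) :
    Tendsto (generalizedInverse V) atTop atTop := by
  refine tendsto_atTop.2 fun M => ?_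
  filter_upwards [eventually_gt_atTop (V M)] with t ht
  refine le_csInf (hV_top.eventually_ge_atTop t).exists fun y hy => ?_
  by_contra! h
  exact (ht.trans_le hy).not_ge (hV h.le)

variable {γ : ℝ} (hγ : 0 < γ) (hV : Monotone V) (hV_top : Tendsto V atTop atTop)
  (hV_rv : IsRegularlyVarying V (1 / γ))
include hγ hV hV_top hV_rv

theorem generalizedInverse_mul_le {x c : ℝ} (hx : 0 < x) (hc : x ^ γ < c) :
    ∀ᶠ t in atTop, generalizedInverse V (x * t) ≤ c * generalizedInverse V t := by
  set b := generalizedInverse V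
  have hxγ : 0 < x ^ γ := Real.rpow_pos_of_pos hx γ
  obtain ⟨k, hk1, hkc⟩ := exists_between ((one_lt_div hxγ).2 hc)
  have hk0 : 0 < k := one_pos.trans hk1
  have hr : x ^ γ < c / k := by rwa [lt_div_iff₀ hk0, mul_comm, ← lt_div_iff₀ hxγ]
  have hrx : x < (c / k) ^ (1 / γ) := by
    calc x = (x ^ γ) ^ (1 / γ) := by rw [one_div, Real.rpow_rpow_inv hx.le hγ.ne']
      _ < (c / k) ^ (1 / γ) := Real.rpow_lt_rpow hxγ.le hr (by positivity)
  have hb_top := tendsto_generalizedInverse_atTop hV hV_top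
  have hratio : Tendsto (fun t => V (c / k * (k * b t)) / V (k * b t)) atTop
      (𝓝 ((c / k) ^ (1 / γ))) :=
    (hV_rv _ (hr.trans' hxγ)).comp (hb_top.const_mul_atTop hk0)
  filter_upwards [hratio.eventually (eventually_gt_nhds hrx), hb_top.eventually_gt_atTop 0,
    eventually_gt_atTop 0, (tendsto_id.const_mul_atTop hx).eventually_gt_atTop (V 0)]
    with t hlt hbt ht hxt
  rw [show c / k * (k * b t) = c * b t by field_simp] at hlt
  have hVk : t ≤ V (k * b t) :=
    le_apply_of_generalizedInverse_lt hV (hV_top.eventually_ge_atTop t).exists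
      (lt_mul_left hbt hk1)
  refine generalizedInverse_le hV hxt ?_
  calc x * t ≤ x * V (k * b t) := by gcongr
    _ ≤ V (c * b t) := ((lt_div_iff₀ (ht.trans_le hVk)).1 hlt).le

theorem IsRegularlyVarying.generalizedInverse :
    IsRegularlyVarying (generalizedInverse V) γ := by
  intro x hx
  have hb_top := tendsto_generalizedInverse_atTop hV hV_top
  have hxγ : 0 < x ^ γ := Real.rpow_pos_of_pos hx γ
  refine tendsto_order.2 ⟨fun c hc => ?_, fun c hc => ?_⟩
  · -- the lower bound is the upper bound for `x⁻¹`, read at time `x * t`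
    obtain ⟨c', hcc', hc'⟩ := exists_between (max_lt hc hxγ)
    have hc'0 : 0 < c' := (le_max_right c 0).trans_lt hcc'
    have hinv : (x⁻¹) ^ γ < c'⁻¹ := by
      rw [Real.inv_rpow hx.le]
      exact inv_strictAnti₀ hc'0 hc'
    have hle := (tendsto_id.const_mul_atTop hx).eventually
      (generalizedInverse_mul_le hγ hV hV_top hV_rv (inv_pos.2 hx) hinv)
    filter_upwards [hle, hb_top.eventually_gt_atTop 0] with t ht hbt
    rw [id, inv_mul_cancel_left₀ hx.ne', inv_mul_eq_div, le_div_iff₀ hc'0] at ht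
    exact ((le_max_left c 0).trans_lt hcc').trans_le ((le_div_iff₀ hbt).2 (by linarith))
  · obtain ⟨c', hc', hcc'⟩ := exists_between hc
    filter_upwards [generalizedInverse_mul_le hγ hV hV_top hV_rv hx hc',
      hb_top.eventually_gt_atTop 0] with t ht hbt
    exact ((div_le_iff₀ hbt).2 ht).trans_lt hcc'

end GeneralizedInverse

theorem lt_one_of_eventually_one_sub_ne_zero {F : ℝ → ℝ} (hF_mono : Monotone F)
    (hF_top : Tendsto F atTop (𝓝 1)) (hF_ne : ∀ᶠ x in atTop, 1 - F x ≠ 0) (y : ℝ) :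
    F y < 1 := by
  obtain ⟨x, hx, hyx⟩ := (hF_ne.and (eventually_ge_atTop y)).exists
  have hF_le : ∀ z, F z ≤ 1 := hF_mono.ge_of_tendsto hF_top
  exact lt_of_le_of_ne (hF_le y) fun hy => hx (by linarith [hF_mono hyx, hF_le x])

theorem tendsto_one_div_one_sub_atTop {F : ℝ → ℝ} (hF_top : Tendsto F atTop (𝓝 1))
    (hF_lt : ∀ y, F y < 1) : Tendsto (fun y => 1 / (1 - F y)) atTop atTop := by
  have h : Tendsto (fun y => 1 - F y) atTop (𝓝[>] 0) :=
    tendsto_nhdsWithin_of_tendsto_nhds_of_eventually_within _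
      (by simpa using (tendsto_const_nhds (x := (1 : ℝ))).sub hF_top)
      (Eventually.of_forall fun y => sub_pos.2 (hF_lt y))
  simpa only [one_div, Pi.inv_def] using h.inv_tendsto_nhdsGT_zero

theorem stmt0_general (γ : ℝ) (hγ : 0 < γ) (F L : ℝ → ℝ)
    (hF_mono : Monotone F)
    (hF_top : Tendsto F atTop (nhds 1))
    (hL_slow : ∀ y > (0:ℝ), Tendsto (fun x => L (y * x) / L x) atTop (nhds 1))
    (h_tail : ∀ᶠ x in atTop, 1 - F x = x ^ (-(1/γ)) * L x)
    (b : ℝ → ℝ)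
    (hb : ∀ t, b t = sInf {y : ℝ | t ≤ 1 / (1 - F y)}) :
    ∃ a : ℝ → ℝ, (∀ t, 0 < a t) ∧
      ∀ x > (0:ℝ),
        Tendsto (fun t => (b (t * x) - b t) / a t) atTop
          (nhds ((x ^ γ - 1) / γ)) := by
  have hL : IsRegularlyVarying L 0 := fun y hy => by simpa using hL_slow y hy
  have h_tail_rv : IsRegularlyVarying (fun x => 1 - F x) (-(1 / γ)) :=
    (hL.rpow_mul _).congr' (h_tail.mono fun _ hx => hx.symm)
  have hF_lt := lt_one_of_eventually_one_sub_ne_zero hF_mono hF_top h_tail_rv.eventually_ne_zero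
  have hV_mono : Monotone fun y => 1 / (1 - F y) := fun y z hyz =>
    one_div_le_one_div_of_le (sub_pos.2 (hF_lt z)) (by linarith [hF_mono hyz])
  have hV_top := tendsto_one_div_one_sub_atTop hF_top hF_lt
  have hV_rv : IsRegularlyVarying (fun y => 1 / (1 - F y)) (1 / γ) := by
    simpa only [one_div, neg_neg] using h_tail_rv.inv
  have hb_eq : b = generalizedInverse fun y => 1 / (1 - F y) := funext hb
  have hb_top : Tendsto b atTop atTop := hb_eq ▸ tendsto_generalizedInverse_atTop hV_mono hV_top
  have hb_rv : IsRegularlyVarying b γ := hb_eq ▸ hV_rv.generalizedInverse hγ hV_mono hV_top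
  refine ⟨fun t => γ * max (b t) 1, fun t => by positivity, fun x hx => ?_⟩
  refine (((hb_rv x hx).sub_const 1).div_const γ).congr' ?_
  filter_upwards [hb_top.eventually_ge_atTop 1] with t ht
  rw [max_eq_left ht, mul_comm t x, div_sub_one (by positivity), div_div, mul_comm (b t) γ]

/-- A cdf with regularly varying tail of index -1/γ belongs to the
domain of attraction of the GEV distribution G_γ. -/
theorem stmt0 (γ : ℝ) (hγ : 0 < γ) (F L : ℝ → ℝ)
    (hF_mono : Monotone F)
    (hF_top : Tendsto F atTop (nhds 1))
    (hF_bot : Tendsto F atBot (nhds 0))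
    (hL_pos : ∀ x > (0:ℝ), 0 < L x)
    (hL_slow : ∀ y > (0:ℝ), Tendsto (fun x => L (y * x) / L x) atTop (nhds 1))
    (h_tail : ∀ᶠ x in atTop, 1 - F x = x ^ (-(1/γ)) * L x)
    (b : ℝ → ℝ)
    (hb : ∀ t, b t = sInf {y : ℝ | t ≤ 1 / (1 - F y)}) :
    ∃ a : ℝ → ℝ, (∀ t, 0 < a t) ∧
      ∀ x > (0:ℝ),
        Tendsto (fun t => (b (t * x) - b t) / a t) atTop
          (nhds ((x ^ γ - 1) / γ)) :=
  stmt0_general γ hγ F L hF_mono hF_top hL_slow h_tail b hb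
end

section
/- Let γ > 0, r < 0. The function ψ(x) := ψ₂(x, ψ₁(x)) - 1/(1-r), where ψ₁(x) := ∫₀^∞ (z/x+1)^{-1/γ}(z+1)^{-1} dz and ψ₂(x,y) := (r/y)∫₀^∞ (z/x+1)^{-1/γ}(z+1)^{r/y - 1} dz + 1, is strictly decreasing on (0,∞). In particular, x = 1 is the unique zero of ψ on (0,∞). -/
/-!
The substitution `z = x (u ^ (-γ) - 1)`, which maps Lebesgue measure on `(0, 1)` to the Lomax law
with survival function `(z / x + 1) ^ (-1 / γ)`, followed by an integration by parts, turns
`ψ₁ x` into `m x = ∫₀¹ ℓₓ` with `ℓₓ u = log (x (u ^ (-γ) - 1) + 1)`, and `ψ₂ x (ψ₁ x)` into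
`∫₀¹ exp (r gₓ)` with `gₓ = ℓₓ / m x`, a function of mean `1`.

For `x₁ < x₂` the ratio `ℓ_{x₂} / ℓ_{x₁}` is strictly increasing in `u`: in the variable
`s = log (u ^ (-γ) - 1)` this is the strict concavity of `s ↦ log (log (1 + exp s))`. Hence
`g_{x₂} - g_{x₁}` changes sign exactly once, from negative to positive, at some `c`. Since
`g_{x₂}` is decreasing, comparing the convex function `t ↦ exp (r t)` with its tangent slope at
`κ = g_{x₂} c` gives `∫ exp (r g_{x₂}) < ∫ exp (r g_{x₁})`.

At `x = 1`, `ℓ₁ u = -γ log u`, so `ψ₁ 1 = γ` and `ψ₂ 1 γ = ∫₀¹ u ^ (-r) = 1 / (1 - r)`.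
-/

open Filter Set MeasureTheory Real Topology

lemma strictMonoOn_add_one_mul_log_add_one_div :
    StrictMonoOn (fun v : ℝ => (v + 1) * log (v + 1) / v) (Ioi 0) := by
  have hderiv : ∀ v ∈ Ioi (0 : ℝ), HasDerivAt (fun v : ℝ => (v + 1) * log (v + 1) / v)
      ((v - log (v + 1)) / v ^ 2) v := by
    intro v (hv : 0 < v)
    have h₁ : HasDerivAt (fun v : ℝ => v + 1) 1 v := (hasDerivAt_id' v).add_const 1
    refine ((h₁.mul (h₁.log (by positivity))).div (hasDerivAt_id' v) hv.ne').congr_deriv ?_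
    simp only [Pi.mul_apply]
    field_simp
    ring
  refine strictMonoOn_of_deriv_pos (convex_Ioi 0)
    (fun v hv => (hderiv v hv).continuousAt.continuousWithinAt) fun v hv => ?_
  rw [interior_Ioi] at hv
  have hv : (0 : ℝ) < v := hv
  have hlog : log (v + 1) < v := by
    linarith [log_lt_sub_one_of_pos (by linarith : 0 < v + 1) (by linarith : v + 1 ≠ 1)]
  rw [(hderiv v hv).deriv]
  exact div_pos (by linarith) (by positivity)

lemma hasDerivAt_log_log_mul_add_one {x t : ℝ} (hx : 0 < x) (ht : 0 < t) :
    HasDerivAt (fun t => log (log (x * t + 1)))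
      (1 / (t * ((x * t + 1) * log (x * t + 1) / (x * t)))) t := by
  have hlog : 0 < log (x * t + 1) := log_pos (by nlinarith)
  have h₁ : HasDerivAt (fun t : ℝ => x * t + 1) x t :=
    (((hasDerivAt_id' t).const_mul x).add_const 1).congr_deriv (mul_one x)
  refine ((h₁.log (by positivity)).log hlog.ne').congr_deriv ?_
  field_simp

/-- In the variable `s = log t` this is the strict concavity of `s ↦ log (log (1 + exp s))`. -/
lemma strictAntiOn_log_log_mul_add_one_sub {x₁ x₂ : ℝ} (hx₁ : 0 < x₁) (hx : x₁ < x₂) :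
    StrictAntiOn (fun t => log (log (x₂ * t + 1)) - log (log (x₁ * t + 1))) (Ioi 0) := by
  have hx₂ : 0 < x₂ := hx₁.trans hx
  have hderiv : ∀ t ∈ Ioi (0 : ℝ),
      HasDerivAt (fun t => log (log (x₂ * t + 1)) - log (log (x₁ * t + 1))) _ t := fun t ht =>
    (hasDerivAt_log_log_mul_add_one hx₂ ht).sub (hasDerivAt_log_log_mul_add_one hx₁ ht)
  refine strictAntiOn_of_deriv_neg (convex_Ioi 0)
    (fun t ht => (hderiv t ht).continuousAt.continuousWithinAt) fun t ht => ?_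
  rw [interior_Ioi] at ht
  have ht : (0 : ℝ) < t := ht
  have hpos : 0 < (x₁ * t + 1) * log (x₁ * t + 1) / (x₁ * t) := by
    have := log_pos (by nlinarith : 1 < x₁ * t + 1)
    positivity
  have hlt := strictMonoOn_add_one_mul_log_add_one_div (mul_pos hx₁ ht) (mul_pos hx₂ ht)
    (by nlinarith)
  rw [(hderiv t ht).deriv, sub_neg]
  gcongr

lemma strictAntiOn_log_mul_add_one_div {x₁ x₂ : ℝ} (hx₁ : 0 < x₁) (hx : x₁ < x₂) :
    StrictAntiOn (fun t : ℝ => log (x₂ * t + 1) / log (x₁ * t + 1)) (Ioi 0) := by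
  have hpos : ∀ {x}, 0 < x → ∀ t ∈ Ioi (0 : ℝ), 0 < log (x * t + 1) :=
    fun hx t (ht : 0 < t) => log_pos (by nlinarith)
  have hx₂ : 0 < x₂ := hx₁.trans hx
  intro s hs t ht hst
  have := strictAntiOn_log_log_mul_add_one_sub hx₁ hx hs ht hst
  simp only at this ⊢
  rw [← log_div (hpos hx₂ t ht).ne' (hpos hx₁ t ht).ne',
    ← log_div (hpos hx₂ s hs).ne' (hpos hx₁ s hs).ne'] at this
  exact (log_lt_log_iff (div_pos (hpos hx₂ t ht) (hpos hx₁ t ht))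
    (div_pos (hpos hx₂ s hs) (hpos hx₁ s hs))).1 this

lemma exp_mul_sub_exp_mul_lt {r a b κ : ℝ} (hr : r < 0)
    (h : κ ≤ b ∧ b < a ∨ a < b ∧ b ≤ κ) :
    exp (r * b) - exp (r * a) < r * exp (r * κ) * (b - a) := by
  have hab : r * (a - b) ≠ 0 := by rcases h with h | h <;> nlinarith
  have htangent : exp (r * b) - exp (r * a) < r * exp (r * b) * (b - a) := by
    have := mul_lt_mul_of_pos_left (add_one_lt_exp hab) (exp_pos (r * b))
    rw [← exp_add, show r * b + r * (a - b) = r * a by ring] at this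
    linarith
  have hslope : r * exp (r * b) * (b - a) ≤ r * exp (r * κ) * (b - a) := by
    rcases h with ⟨hκ, hba⟩ | ⟨hab, hbκ⟩
    · have : exp (r * b) ≤ exp (r * κ) := exp_le_exp.2 (by nlinarith)
      nlinarith [mul_le_mul_of_nonneg_right this (by nlinarith : 0 ≤ r * (b - a))]
    · have : exp (r * κ) ≤ exp (r * b) := exp_le_exp.2 (by nlinarith)
      nlinarith [mul_le_mul_of_nonpos_right this (by nlinarith : r * (b - a) ≤ 0)]
  exact htangent.trans_le hslope

lemma one_lt_rpow_neg {γ u : ℝ} (hγ : 0 < γ) (hu : u ∈ Ioo (0 : ℝ) 1) : 1 < u ^ (-γ) :=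
  one_lt_rpow_of_pos_of_lt_one_of_neg hu.1 hu.2 (neg_neg_of_pos hγ)

lemma integrableOn_Ioi_add_one_rpow {c : ℝ} (hc : c < -1) :
    IntegrableOn (fun z : ℝ => (z + 1) ^ c) (Ioi 0) := by
  have := (measurePreserving_add_right volume (1 : ℝ)).integrableOn_comp_preimage
    (measurableEmbedding_addRight 1) |>.2 (integrableOn_Ioi_rpow_of_lt hc one_pos)
  simpa [Function.comp_def] using this

lemma tendsto_add_one_rpow_neg_mul_log {a : ℝ} (ha : 0 < a) :
    Tendsto (fun z : ℝ => (z + 1) ^ (-a) * log (z + 1)) atTop (𝓝 0) := by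
  have hlim := ((isLittleO_log_rpow_atTop ha).tendsto_div_nhds_zero).comp
    (tendsto_atTop_add_const_right atTop 1 tendsto_id)
  refine hlim.congr' ((eventually_ge_atTop 0).mono fun z hz => ?_)
  simp only [Function.comp_apply, id, rpow_neg (by linarith : (0 : ℝ) ≤ z + 1)]
  ring

lemma integral_pos_of_ae_pos {α : Type*} [MeasurableSpace α] {μ : Measure α} [NeZero μ]
    {f : α → ℝ} (hf : Integrable f μ) (hpos : ∀ᵐ a ∂μ, 0 < f a) : 0 < ∫ a, f a ∂μ := by
  rw [integral_pos_iff_support_of_nonneg_ae (hpos.mono fun _ => le_of_lt) hf, pos_iff_ne_zero]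
  intro hzero
  obtain ⟨a, hfa, hmem⟩ := (hpos.and (measure_eq_zero_iff_ae_notMem.1 hzero)).exists
  exact hmem (Function.mem_support.2 hfa.ne')

/-- Pointwise `exp (r * g₂) - exp (r * g₁) < r * exp (r * κ) * (g₂ - g₁)` by convexity, and the
right-hand side integrates to `0`. -/
lemma integral_exp_mul_lt_of_crossing {α : Type*} [MeasurableSpace α] {μ : Measure α} [NeZero μ]
    {g₁ g₂ : α → ℝ} {r κ : ℝ} (hr : r < 0) (hg₁ : Integrable g₁ μ) (hg₂ : Integrable g₂ μ)
    (he₁ : Integrable (fun a => exp (r * g₁ a)) μ) (he₂ : Integrable (fun a => exp (r * g₂ a)) μ)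
    (hmean : ∫ a, g₁ a ∂μ = ∫ a, g₂ a ∂μ)
    (hcross : ∀ᵐ a ∂μ, κ ≤ g₂ a ∧ g₂ a < g₁ a ∨ g₁ a < g₂ a ∧ g₂ a ≤ κ) :
    ∫ a, exp (r * g₂ a) ∂μ < ∫ a, exp (r * g₁ a) ∂μ := by
  have hint : Integrable (fun a => r * exp (r * κ) * (g₂ a - g₁ a)) μ :=
    (hg₂.sub hg₁).const_mul _
  have hpos : 0 < ∫ a, (r * exp (r * κ) * (g₂ a - g₁ a) - (exp (r * g₂ a) - exp (r * g₁ a))) ∂μ :=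
    integral_pos_of_ae_pos (hint.sub' (he₂.sub' he₁))
      (hcross.mono fun a ha => sub_pos.2 (exp_mul_sub_exp_mul_lt hr ha))
  rw [integral_sub hint (he₂.sub' he₁), integral_const_mul, integral_sub hg₂ hg₁,
    integral_sub he₂ he₁, hmean, sub_self, mul_zero, zero_sub, neg_pos, sub_neg] at hpos
  exact hpos

lemma IsPreconnected.exists_crossing {s : Set ℝ} (hs : IsPreconnected s) {g₁ g₂ : ℝ → ℝ}
    (hg₁ : ContinuousOn g₁ s) (hg₂ : ContinuousOn g₂ s) (hpos : ∀ u ∈ s, 0 < g₁ u)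
    (hmono : StrictMonoOn (fun u => g₂ u / g₁ u) s) {a b : ℝ} (ha : a ∈ s) (hb : b ∈ s)
    (hga : g₂ a ≤ g₁ a) (hgb : g₁ b ≤ g₂ b) :
    ∃ c ∈ s, ∀ u ∈ s, (u < c → g₂ u < g₁ u) ∧ (c < u → g₁ u < g₂ u) := by
  obtain ⟨c, hc, hc1⟩ := hs.intermediate_value ha hb (hg₂.div hg₁ fun u hu => (hpos u hu).ne')
    ⟨(div_le_one (hpos a ha)).2 hga, (one_le_div (hpos b hb)).2 hgb⟩
  refine ⟨c, hc, fun u hu => ⟨fun huc => ?_, fun hcu => ?_⟩⟩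
  · exact (div_lt_one (hpos u hu)).1 (hc1 ▸ hmono hu hc huc)
  · exact (one_lt_div (hpos u hu)).1 (hc1 ▸ hmono hc hu hcu)

/-- `lomaxQuantile γ x` inverts `lomaxSurvival γ x`, the survival function of the Lomax law with
shape `1 / γ`, scale `x` and density `lomaxDensity γ x`; so it pushes Lebesgue measure on `(0, 1)`
forward to that law. -/
noncomputable def lomaxQuantile (γ x u : ℝ) : ℝ := x * (u ^ (-γ) - 1)

noncomputable def lomaxSurvival (γ x z : ℝ) : ℝ := (z / x + 1) ^ (-(1 / γ))

noncomputable def lomaxDensity (γ x z : ℝ) : ℝ := 1 / γ / x * (z / x + 1) ^ (-(1 / γ) - 1)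

section Lomax

variable {γ x : ℝ}

lemma lomaxQuantile_pos (hγ : 0 < γ) (hx : 0 < x) {u : ℝ} (hu : u ∈ Ioo (0 : ℝ) 1) :
    0 < lomaxQuantile γ x u :=
  mul_pos hx (sub_pos.2 (one_lt_rpow_neg hγ hu))

lemma strictAntiOn_lomaxQuantile (hγ : 0 < γ) (hx : 0 < x) :
    StrictAntiOn (lomaxQuantile γ x) (Ioo 0 1) := fun _ hu _ _ huv =>
  mul_lt_mul_of_pos_left (sub_lt_sub_right (rpow_lt_rpow_of_neg hu.1 huv (by linarith)) 1) hx

lemma continuousOn_lomaxQuantile : ContinuousOn (lomaxQuantile γ x) (Ioo 0 1) :=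
  continuousOn_const.mul <| (continuousOn_id.rpow_const fun _ hu => Or.inl hu.1.ne').sub
    continuousOn_const

lemma hasDerivAt_lomaxQuantile {u : ℝ} (hu : 0 < u) :
    HasDerivAt (lomaxQuantile γ x) (x * (-γ * u ^ (-γ - 1))) u :=
  ((hasDerivAt_rpow_const (Or.inl hu.ne')).sub_const 1).const_mul x

lemma lomaxQuantile_image (hγ : 0 < γ) (hx : 0 < x) :
    lomaxQuantile γ x '' Ioo 0 1 = Ioi 0 := by
  refine (image_subset_iff.2 fun u hu => lomaxQuantile_pos hγ hx hu).antisymm fun z hz => ?_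
  have hz : 1 < z / x + 1 := by have := div_pos (mem_Ioi.1 hz) hx; linarith
  refine ⟨(z / x + 1) ^ (-(1 / γ)), ⟨by positivity, rpow_lt_one_of_one_lt_of_neg hz
    (by simp [hγ])⟩, ?_⟩
  show x * (((z / x + 1) ^ (-(1 / γ))) ^ (-γ) - 1) = z
  rw [← rpow_mul (by positivity), neg_mul_neg, one_div_mul_cancel hγ.ne', rpow_one]
  field_simp
  ring

lemma abs_deriv_lomaxQuantile_mul_lomaxDensity (hγ : 0 < γ) (hx : 0 < x) {u : ℝ} (hu : 0 < u) :
    |x * (-γ * u ^ (-γ - 1))| * lomaxDensity γ x (lomaxQuantile γ x u) = 1 := by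
  have hbase : lomaxQuantile γ x u / x + 1 = u ^ (-γ) := by
    rw [lomaxQuantile]; field_simp; ring
  have hexp : -γ * (-(1 / γ) - 1) = -(-γ - 1) := by field_simp; ring
  have hpow := rpow_pos_of_pos hu (-γ - 1)
  rw [lomaxDensity, hbase, ← rpow_mul hu.le, hexp, rpow_neg hu.le,
    abs_of_neg (by nlinarith [mul_pos hx hγ])]
  field_simp

lemma hasDerivWithinAt_lomaxQuantile (u : ℝ) (hu : u ∈ Ioo (0 : ℝ) 1) :
    HasDerivWithinAt (lomaxQuantile γ x) (x * (-γ * u ^ (-γ - 1))) (Ioo 0 1) u :=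
  (hasDerivAt_lomaxQuantile hu.1).hasDerivWithinAt

lemma integral_lomaxDensity_mul (hγ : 0 < γ) (hx : 0 < x) (h : ℝ → ℝ) :
    ∫ z in Ioi 0, lomaxDensity γ x z * h z = ∫ u in Ioo 0 1, h (lomaxQuantile γ x u) := by
  rw [← lomaxQuantile_image hγ hx, integral_image_eq_integral_abs_deriv_smul measurableSet_Ioo
    hasDerivWithinAt_lomaxQuantile ((strictAntiOn_lomaxQuantile hγ hx).injOn)]
  refine setIntegral_congr_fun measurableSet_Ioo fun u hu => ?_
  rw [smul_eq_mul, ← mul_assoc, abs_deriv_lomaxQuantile_mul_lomaxDensity hγ hx hu.1, one_mul]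

lemma integrableOn_lomaxDensity_mul_iff (hγ : 0 < γ) (hx : 0 < x) (h : ℝ → ℝ) :
    IntegrableOn (fun z => lomaxDensity γ x z * h z) (Ioi 0) ↔
      IntegrableOn (fun u => h (lomaxQuantile γ x u)) (Ioo 0 1) := by
  rw [← lomaxQuantile_image hγ hx, integrableOn_image_iff_integrableOn_abs_deriv_smul
    measurableSet_Ioo hasDerivWithinAt_lomaxQuantile ((strictAntiOn_lomaxQuantile hγ hx).injOn)]
  refine integrableOn_congr_fun (fun u hu => ?_) measurableSet_Ioo
  rw [smul_eq_mul, ← mul_assoc, abs_deriv_lomaxQuantile_mul_lomaxDensity hγ hx hu.1, one_mul]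

lemma hasDerivAt_lomaxSurvival (hx : 0 < x) {z : ℝ} (hz : 0 < z) :
    HasDerivAt (lomaxSurvival γ x) (-lomaxDensity γ x z) z := by
  have hbase : HasDerivAt (fun z => z / x + 1) (1 / x) z :=
    ((hasDerivAt_id' z).div_const x).add_const 1
  refine (hbase.rpow_const (Or.inl (by positivity))).congr_deriv ?_
  rw [lomaxDensity]
  ring

lemma integral_comp_lomaxQuantile {h h' : ℝ → ℝ} (hγ : 0 < γ) (hx : 0 < x)
    (hderiv : ∀ z ∈ Ioi 0, HasDerivAt h (h' z) z) (hzero : ContinuousWithinAt h (Ioi 0) 0)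
    (hint : IntegrableOn (fun u => h (lomaxQuantile γ x u)) (Ioo 0 1))
    (hint' : IntegrableOn (fun z => lomaxSurvival γ x z * h' z) (Ioi 0))
    (hlim : Tendsto (fun z => lomaxSurvival γ x z * h z) atTop (𝓝 0)) :
    ∫ u in Ioo 0 1, h (lomaxQuantile γ x u) = h 0 + ∫ z in Ioi 0, lomaxSurvival γ x z * h' z := by
  have hS : ContinuousAt (lomaxSurvival γ x) 0 :=
    ((continuousAt_id.div_const x).add continuousAt_const).rpow_const (Or.inl (by simp))
  have hS0 : Tendsto (fun z => lomaxSurvival γ x z * h z) (𝓝[>] 0) (𝓝 (h 0)) := by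
    simpa [lomaxSurvival] using (hS.tendsto.mono_left nhdsWithin_le_nhds).mul hzero
  have hint'' : IntegrableOn (fun z => -lomaxDensity γ x z * h z) (Ioi 0) := by
    simp only [neg_mul]
    exact ((integrableOn_lomaxDensity_mul_iff hγ hx h).2 hint).fun_neg
  have := integral_Ioi_mul_deriv_eq_deriv_mul (fun z hz => hasDerivAt_lomaxSurvival hx hz)
    hderiv hint' hint'' hS0 hlim
  simp only [neg_mul, integral_neg, integral_lomaxDensity_mul hγ hx] at this
  linarith

lemma one_lt_lomaxQuantile_add_one (hγ : 0 < γ) (hx : 0 < x) {u : ℝ} (hu : u ∈ Ioo (0 : ℝ) 1) :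
    1 < lomaxQuantile γ x u + 1 := by
  linarith [lomaxQuantile_pos hγ hx hu]

lemma continuousOn_log_lomaxQuantile_add_one (hγ : 0 < γ) (hx : 0 < x) :
    ContinuousOn (fun u => log (lomaxQuantile γ x u + 1)) (Ioo 0 1) :=
  (continuousOn_lomaxQuantile.add continuousOn_const).log fun _ hu =>
    (zero_lt_one.trans (one_lt_lomaxQuantile_add_one hγ hx hu)).ne'

lemma integrableOn_log_lomaxQuantile_add_one (hγ : 0 < γ) (hx : 0 < x) :
    IntegrableOn (fun u => log (lomaxQuantile γ x u + 1)) (Ioo 0 1) := by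
  have hlog : IntegrableOn log (Ioo (0 : ℝ) 1) :=
    intervalIntegral.intervalIntegrable_log'.1.mono_set Ioo_subset_Ioc_self
  refine Integrable.mono' ((integrableOn_const (C := log (x + 1)) (by simp)).sub
    (hlog.const_mul γ))
    ((continuousOn_log_lomaxQuantile_add_one hγ hx).aestronglyMeasurable measurableSet_Ioo)
    ((ae_restrict_mem measurableSet_Ioo).mono fun u hu => ?_)
  have hQ := one_lt_lomaxQuantile_add_one hγ hx hu
  have hpow := one_lt_rpow_neg hγ hu
  rw [norm_of_nonneg (log_nonneg hQ.le)]
  calc log (lomaxQuantile γ x u + 1) ≤ log ((x + 1) * u ^ (-γ)) :=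
        log_le_log (by linarith) (by rw [lomaxQuantile]; nlinarith)
    _ = log (x + 1) - γ * log u := by
        rw [log_mul (by linarith) (by linarith), log_rpow hu.1]
        ring

lemma integrableOn_lomaxQuantile_add_one_rpow (hγ : 0 < γ) (hx : 0 < x) {s : ℝ} (hs : s ≤ 0) :
    IntegrableOn (fun u => (lomaxQuantile γ x u + 1) ^ s) (Ioo 0 1) := by
  have hcont : ContinuousOn (fun u => (lomaxQuantile γ x u + 1) ^ s) (Ioo 0 1) :=
    (continuousOn_lomaxQuantile.add continuousOn_const).rpow_const fun u hu =>
      Or.inl (zero_lt_one.trans (one_lt_lomaxQuantile_add_one hγ hx hu)).ne'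
  refine Integrable.mono' (integrableOn_const (C := (1 : ℝ)) (by simp))
    (hcont.aestronglyMeasurable measurableSet_Ioo) ((ae_restrict_mem measurableSet_Ioo).mono
      fun u hu => ?_)
  have hQ := one_lt_lomaxQuantile_add_one hγ hx hu
  rw [norm_of_nonneg (by positivity)]
  exact rpow_le_one_of_one_le_of_nonpos hQ.le hs

lemma lomaxSurvival_le_one (hγ : 0 < γ) (hx : 0 < x) {z : ℝ} (hz : 0 ≤ z) :
    lomaxSurvival γ x z ≤ 1 :=
  rpow_le_one_of_one_le_of_nonpos (le_add_of_nonneg_left (by positivity))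
    (neg_nonpos.2 (by positivity))

lemma lomaxSurvival_le (hγ : 0 < γ) (hx : 0 < x) {z : ℝ} (hz : 0 ≤ z) :
    lomaxSurvival γ x z ≤ max x 1 ^ (1 / γ) * (z + 1) ^ (-(1 / γ)) := by
  have hM : 0 < max x 1 := lt_max_of_lt_right one_pos
  have hbase : (z + 1) / max x 1 ≤ z / x + 1 := by
    rw [add_div]
    exact add_le_add (div_le_div_of_nonneg_left hz hx (le_max_left x 1))
      (div_le_one_of_le₀ (le_max_right x 1) hM.le)
  calc lomaxSurvival γ x z ≤ ((z + 1) / max x 1) ^ (-(1 / γ)) :=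
        rpow_le_rpow_of_nonpos (by positivity) hbase (neg_nonpos.2 (by positivity))
    _ = max x 1 ^ (1 / γ) * (z + 1) ^ (-(1 / γ)) := by
        rw [div_rpow (by positivity) hM.le, rpow_neg hM.le, div_inv_eq_mul, mul_comm]

lemma continuousOn_lomaxSurvival (hx : 0 < x) : ContinuousOn (lomaxSurvival γ x) (Ioi 0) :=
  (((continuousOn_id' _).div_const x).add continuousOn_const).rpow_const fun z hz =>
    Or.inl (show z / x + 1 ≠ 0 by have : 0 < z := hz; positivity)

lemma integrableOn_lomaxSurvival_mul_inv (hγ : 0 < γ) (hx : 0 < x) :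
    IntegrableOn (fun z => lomaxSurvival γ x z * (z + 1)⁻¹) (Ioi 0) := by
  have hinv : ContinuousOn (fun z : ℝ => (z + 1)⁻¹) (Ioi 0) :=
    ((continuousOn_id' _).add continuousOn_const).inv₀ fun z hz =>
      show z + 1 ≠ 0 by have : 0 < z := hz; positivity
  refine Integrable.mono' ((integrableOn_Ioi_add_one_rpow (c := -(1 / γ) - 1)
    (by linarith [one_div_pos.2 hγ])).const_mul (max x 1 ^ (1 / γ)))
    (((continuousOn_lomaxSurvival hx).mul hinv).aestronglyMeasurable measurableSet_Ioi)
    ((ae_restrict_mem measurableSet_Ioi).mono fun z (hz : 0 < z) => ?_)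
  rw [norm_of_nonneg (by unfold lomaxSurvival; positivity), rpow_sub (by positivity), rpow_one,
    ← mul_div_assoc, ← div_eq_mul_inv]
  gcongr
  exact lomaxSurvival_le hγ hx hz.le

lemma tendsto_lomaxSurvival_mul_log (hγ : 0 < γ) (hx : 0 < x) :
    Tendsto (fun z => lomaxSurvival γ x z * log (z + 1)) atTop (𝓝 0) := by
  have hbound := (tendsto_add_one_rpow_neg_mul_log (by positivity : 0 < 1 / γ)).const_mul
    (max x 1 ^ (1 / γ))
  rw [mul_zero] at hbound
  refine squeeze_zero' ((eventually_ge_atTop 0).mono fun z hz => ?_)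
    ((eventually_ge_atTop 0).mono fun z hz => ?_) hbound
  · have := log_nonneg (by linarith : (1 : ℝ) ≤ z + 1)
    unfold lomaxSurvival
    positivity
  · rw [← mul_assoc]
    gcongr
    · exact log_nonneg (by linarith)
    · exact lomaxSurvival_le hγ hx hz

lemma integrableOn_lomaxSurvival_mul_rpow (hγ : 0 < γ) (hx : 0 < x) {c : ℝ} (hc : c < -1) :
    IntegrableOn (fun z => lomaxSurvival γ x z * (z + 1) ^ c) (Ioi 0) := by
  have hpow : ContinuousOn (fun z : ℝ => (z + 1) ^ c) (Ioi 0) :=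
    ((continuousOn_id' _).add continuousOn_const).rpow_const fun z hz =>
      Or.inl (show z + 1 ≠ 0 by have : 0 < z := hz; positivity)
  refine Integrable.mono' (integrableOn_Ioi_add_one_rpow hc)
    (((continuousOn_lomaxSurvival hx).mul hpow).aestronglyMeasurable measurableSet_Ioi)
    ((ae_restrict_mem measurableSet_Ioi).mono fun z (hz : 0 < z) => ?_)
  rw [norm_of_nonneg (by unfold lomaxSurvival; positivity)]
  exact mul_le_of_le_one_left (by positivity) (lomaxSurvival_le_one hγ hx hz.le)

lemma tendsto_lomaxSurvival_mul_rpow (hγ : 0 < γ) (hx : 0 < x) {s : ℝ} (hs : s < 0) :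
    Tendsto (fun z => lomaxSurvival γ x z * (z + 1) ^ s) atTop (𝓝 0) := by
  have hdecay : Tendsto (fun z : ℝ => (z + 1) ^ s) atTop (𝓝 0) := by
    simpa [Function.comp_def] using (tendsto_rpow_neg_atTop (neg_pos.2 hs)).comp
      (tendsto_atTop_add_const_right atTop 1 tendsto_id)
  refine squeeze_zero' ((eventually_gt_atTop 0).mono fun z hz => ?_)
    ((eventually_gt_atTop 0).mono fun z hz => ?_) hdecay
  · unfold lomaxSurvival
    positivity
  · exact mul_le_of_le_one_left (by positivity) (lomaxSurvival_le_one hγ hx hz.le)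

lemma integral_lomaxSurvival_mul_inv (hγ : 0 < γ) (hx : 0 < x) :
    ∫ z in Ioi 0, lomaxSurvival γ x z * (z + 1)⁻¹ =
      ∫ u in Ioo 0 1, log (lomaxQuantile γ x u + 1) := by
  rw [integral_comp_lomaxQuantile hγ hx (h := fun z => log (z + 1)) (h' := fun z => (z + 1)⁻¹)
    (fun z (hz : 0 < z) => (((hasDerivAt_id' z).add_const 1).log (by positivity)).congr_deriv
      (one_div _)) ((continuous_add_const 1).continuousAt.log (by simp)).continuousWithinAt
    (integrableOn_log_lomaxQuantile_add_one hγ hx) (integrableOn_lomaxSurvival_mul_inv hγ hx)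
    (tendsto_lomaxSurvival_mul_log hγ hx)]
  simp

lemma mul_integral_lomaxSurvival_mul_rpow_add_one (hγ : 0 < γ) (hx : 0 < x) {s : ℝ}
    (hs : s < 0) :
    s * (∫ z in Ioi 0, lomaxSurvival γ x z * (z + 1) ^ (s - 1)) + 1 =
      ∫ u in Ioo 0 1, (lomaxQuantile γ x u + 1) ^ s := by
  rw [integral_comp_lomaxQuantile hγ hx (h := fun z => (z + 1) ^ s)
    (h' := fun z => s * (z + 1) ^ (s - 1))
    (fun z (hz : 0 < z) => (((hasDerivAt_id' z).add_const 1).rpow_const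
      (Or.inl (by positivity))).congr_deriv (by ring))
    ((continuous_add_const 1).continuousAt.rpow_const (Or.inl (by simp))).continuousWithinAt
    (integrableOn_lomaxQuantile_add_one_rpow hγ hx hs.le)
    (((integrableOn_lomaxSurvival_mul_rpow hγ hx (by linarith)).const_mul s).congr
      (ae_of_all _ fun _ => mul_left_comm _ _ _))
    (tendsto_lomaxSurvival_mul_rpow hγ hx hs)]
  simp only [zero_add, one_rpow, mul_left_comm _ s, integral_const_mul]
  ring

end Lomax

instance : NeZero (volume.restrict (Ioo (0 : ℝ) 1)) := ⟨by simp⟩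

section NormalizedLog

variable {γ x : ℝ}

lemma strictAntiOn_log_lomaxQuantile_add_one (hγ : 0 < γ) (hx : 0 < x) :
    StrictAntiOn (fun u => log (lomaxQuantile γ x u + 1)) (Ioo 0 1) := fun u hu v hv huv =>
  log_lt_log (by linarith [lomaxQuantile_pos hγ hx hv]) <| by
    linarith [strictAntiOn_lomaxQuantile hγ hx hu hv huv]

lemma integral_log_lomaxQuantile_add_one_pos (hγ : 0 < γ) (hx : 0 < x) :
    0 < ∫ u in Ioo 0 1, log (lomaxQuantile γ x u + 1) :=
  integral_pos_of_ae_pos (integrableOn_log_lomaxQuantile_add_one hγ hx)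
    ((ae_restrict_mem measurableSet_Ioo).mono fun _ hu =>
      log_pos (one_lt_lomaxQuantile_add_one hγ hx hu))

lemma strictMonoOn_log_lomaxQuantile_add_one_div {x₁ x₂ : ℝ} (hγ : 0 < γ) (hx₁ : 0 < x₁)
    (hx : x₁ < x₂) :
    StrictMonoOn (fun u => log (lomaxQuantile γ x₂ u + 1) / log (lomaxQuantile γ x₁ u + 1))
      (Ioo 0 1) := fun _ hu _ hv huv =>
  strictAntiOn_log_mul_add_one_div hx₁ hx (sub_pos.2 (one_lt_rpow_neg hγ hv))
    (sub_pos.2 (one_lt_rpow_neg hγ hu))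
    (sub_lt_sub_right (rpow_lt_rpow_of_neg hu.1 huv (neg_neg_of_pos hγ)) 1)

noncomputable def normalizedLog (γ x u : ℝ) : ℝ :=
  log (lomaxQuantile γ x u + 1) / ∫ v in Ioo 0 1, log (lomaxQuantile γ x v + 1)

lemma integrableOn_normalizedLog (hγ : 0 < γ) (hx : 0 < x) :
    IntegrableOn (normalizedLog γ x) (Ioo 0 1) :=
  (integrableOn_log_lomaxQuantile_add_one hγ hx).div_const _

lemma integral_normalizedLog (hγ : 0 < γ) (hx : 0 < x) :
    ∫ u in Ioo 0 1, normalizedLog γ x u = 1 := by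
  simp only [normalizedLog, integral_div]
  exact div_self (integral_log_lomaxQuantile_add_one_pos hγ hx).ne'

lemma strictAntiOn_normalizedLog (hγ : 0 < γ) (hx : 0 < x) :
    StrictAntiOn (normalizedLog γ x) (Ioo 0 1) := fun _ hu _ hv huv =>
  div_lt_div_of_pos_right (strictAntiOn_log_lomaxQuantile_add_one hγ hx hu hv huv)
    (integral_log_lomaxQuantile_add_one_pos hγ hx)

lemma exists_crossing_normalizedLog {x₁ x₂ : ℝ} (hγ : 0 < γ) (hx₁ : 0 < x₁) (hx : x₁ < x₂) :
    ∃ c ∈ Ioo (0 : ℝ) 1, ∀ u ∈ Ioo (0 : ℝ) 1,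
      (u < c → normalizedLog γ x₂ u < normalizedLog γ x₁ u) ∧
        (c < u → normalizedLog γ x₁ u < normalizedLog γ x₂ u) := by
  have hx₂ : 0 < x₂ := hx₁.trans hx
  have hm₁ := integral_log_lomaxQuantile_add_one_pos hγ hx₁
  have hm₂ := integral_log_lomaxQuantile_add_one_pos hγ hx₂
  have hnot_lt : ∀ {y₁ y₂ : ℝ}, 0 < y₁ → 0 < y₂ →
      ∃ a ∈ Ioo (0 : ℝ) 1, normalizedLog γ y₂ a ≤ normalizedLog γ y₁ a := by
    intro y₁ y₂ hy₁ hy₂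
    by_contra! hlt
    have := integral_pos_of_ae_pos ((integrableOn_normalizedLog hγ hy₂).sub'
      (integrableOn_normalizedLog hγ hy₁)) ((ae_restrict_mem measurableSet_Ioo).mono
        fun u hu => sub_pos.2 (hlt u hu))
    rw [integral_sub (integrableOn_normalizedLog hγ hy₂) (integrableOn_normalizedLog hγ hy₁),
      integral_normalizedLog hγ hy₁, integral_normalizedLog hγ hy₂, sub_self] at this
    exact lt_irrefl 0 this
  obtain ⟨a, ha, hga⟩ := hnot_lt hx₁ hx₂
  obtain ⟨b, hb, hgb⟩ := hnot_lt hx₂ hx₁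
  have hratio : StrictMonoOn (fun u => normalizedLog γ x₂ u / normalizedLog γ x₁ u)
      (Ioo 0 1) := fun u hu v hv huv => by
    convert div_lt_div_of_pos_right (strictMonoOn_log_lomaxQuantile_add_one_div hγ hx₁ hx hu hv
      huv) (div_pos hm₂ hm₁) using 1 <;> simp only [normalizedLog] <;> ring
  exact isPreconnected_Ioo.exists_crossing
    ((continuousOn_log_lomaxQuantile_add_one hγ hx₁).div_const _)
    ((continuousOn_log_lomaxQuantile_add_one hγ hx₂).div_const _)
    (fun u hu => div_pos (log_pos (one_lt_lomaxQuantile_add_one hγ hx₁ hu)) hm₁) hratio ha hb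
    hga hgb

lemma lomaxQuantile_add_one_rpow_eq_exp (hγ : 0 < γ) (hx : 0 < x) (r : ℝ) {u : ℝ}
    (hu : u ∈ Ioo (0 : ℝ) 1) :
    (lomaxQuantile γ x u + 1) ^ (r / ∫ v in Ioo 0 1, log (lomaxQuantile γ x v + 1)) =
      exp (r * normalizedLog γ x u) := by
  rw [rpow_def_of_pos (zero_lt_one.trans (one_lt_lomaxQuantile_add_one hγ hx hu)), normalizedLog]
  ring_nf

lemma integrableOn_exp_mul_normalizedLog (hγ : 0 < γ) (hx : 0 < x) {r : ℝ} (hr : r ≤ 0) :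
    IntegrableOn (fun u => exp (r * normalizedLog γ x u)) (Ioo 0 1) :=
  (integrableOn_lomaxQuantile_add_one_rpow hγ hx
    (div_nonpos_of_nonpos_of_nonneg hr (integral_log_lomaxQuantile_add_one_pos hγ hx).le)).congr_fun
    (fun _ hu => lomaxQuantile_add_one_rpow_eq_exp hγ hx r hu) measurableSet_Ioo

lemma integral_exp_mul_normalizedLog_lt {x₁ x₂ r : ℝ} (hγ : 0 < γ) (hr : r < 0) (hx₁ : 0 < x₁)
    (hx : x₁ < x₂) :
    ∫ u in Ioo 0 1, exp (r * normalizedLog γ x₂ u) <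
      ∫ u in Ioo 0 1, exp (r * normalizedLog γ x₁ u) := by
  have hx₂ : 0 < x₂ := hx₁.trans hx
  obtain ⟨c, hc, hcross⟩ := exists_crossing_normalizedLog hγ hx₁ hx
  have hne : ∀ᵐ u ∂volume.restrict (Ioo (0 : ℝ) 1), u ∉ ({c} : Set ℝ) :=
    ae_restrict_of_ae (measure_eq_zero_iff_ae_notMem.1 (measure_singleton c))
  refine integral_exp_mul_lt_of_crossing (κ := normalizedLog γ x₂ c) hr
    (integrableOn_normalizedLog hγ hx₁) (integrableOn_normalizedLog hγ hx₂)
    (integrableOn_exp_mul_normalizedLog hγ hx₁ hr.le)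
    (integrableOn_exp_mul_normalizedLog hγ hx₂ hr.le)
    (by rw [integral_normalizedLog hγ hx₁, integral_normalizedLog hγ hx₂]) ?_
  filter_upwards [ae_restrict_mem measurableSet_Ioo, hne] with u hu huc
  rcases (show u ≠ c from huc).lt_or_gt with h | h
  · exact .inl ⟨(strictAntiOn_normalizedLog hγ hx₂ hu hc h).le, (hcross u hu).1 h⟩
  · exact .inr ⟨(hcross u hu).2 h, (strictAntiOn_normalizedLog hγ hx₂ hc hu h).le⟩

lemma integral_log_lomaxQuantile_one_add_one :
    ∫ u in Ioo 0 1, log (lomaxQuantile γ 1 u + 1) = γ := by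
  have hlog : ∫ u in Ioo (0 : ℝ) 1, log u = -1 := by
    rw [← integral_Ioc_eq_integral_Ioo, ← intervalIntegral.integral_of_le zero_le_one,
      integral_log]
    simp
  rw [setIntegral_congr_fun measurableSet_Ioo (g := fun u => -γ * log u) fun u hu => by
    simp only [lomaxQuantile, one_mul, sub_add_cancel, log_rpow hu.1], integral_const_mul, hlog]
  ring

lemma integral_exp_mul_normalizedLog_one (hγ : 0 < γ) {r : ℝ} (hr : r < 1) :
    ∫ u in Ioo 0 1, exp (r * normalizedLog γ 1 u) = 1 / (1 - r) := by
  rw [setIntegral_congr_fun measurableSet_Ioo (g := fun u => u ^ (-r)) fun u hu => by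
    rw [normalizedLog, integral_log_lomaxQuantile_one_add_one]
    simp only [lomaxQuantile, one_mul, sub_add_cancel]
    rw [log_rpow hu.1, rpow_def_of_pos hu.1]
    field_simp, ← integral_Ioc_eq_integral_Ioo, ← intervalIntegral.integral_of_le zero_le_one,
    integral_rpow (Or.inl (by linarith)), zero_rpow (by linarith), one_rpow]
  ring

end NormalizedLog

/-- ψ(x) = ψ₂(x, ψ₁(x)) - 1/(1-r), with
ψ₁(x) = ∫₀^∞ (z/x+1)^{-1/γ}(z+1)^{-1} dz and
ψ₂(x,y) = (r/y)∫₀^∞ (z/x+1)^{-1/γ}(z+1)^{r/y-1} dz + 1,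
is strictly decreasing on (0,∞) and x = 1 is its unique zero there. -/
theorem stmt7 (γ r : ℝ) (hγ : 0 < γ) (hr : r < 0)
    (ψ₁ : ℝ → ℝ) (ψ₂ : ℝ → ℝ → ℝ) (ψ : ℝ → ℝ)
    (hψ₁ : ∀ x : ℝ, 0 < x →
      ψ₁ x = ∫ z in Ioi (0:ℝ), (z / x + 1) ^ (-(1/γ)) * (z + 1)⁻¹)
    (hψ₂ : ∀ x y : ℝ, 0 < x → 0 < y →
      ψ₂ x y = (r / y) *
        (∫ z in Ioi (0:ℝ), (z / x + 1) ^ (-(1/γ)) * (z + 1) ^ (r / y - 1)) + 1)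
    (hψ : ∀ x : ℝ, 0 < x → ψ x = ψ₂ x (ψ₁ x) - 1 / (1 - r)) :
    StrictAntiOn ψ (Ioi 0) ∧ ∀ x ∈ Ioi (0:ℝ), (ψ x = 0 ↔ x = 1) := by
  have hψ₁_eq : ∀ x, 0 < x → ψ₁ x = ∫ u in Ioo 0 1, log (lomaxQuantile γ x u + 1) :=
    fun x hx => (hψ₁ x hx).trans (integral_lomaxSurvival_mul_inv hγ hx)
  have hψ_eq : ∀ x, 0 < x →
      ψ x = (∫ u in Ioo 0 1, exp (r * normalizedLog γ x u)) - 1 / (1 - r) := by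
    intro x hx
    have hm : 0 < ψ₁ x := hψ₁_eq x hx ▸ integral_log_lomaxQuantile_add_one_pos hγ hx
    have hψ₂_eq := mul_integral_lomaxSurvival_mul_rpow_add_one hγ hx (div_neg_of_neg_of_pos hr hm)
    unfold lomaxSurvival at hψ₂_eq
    rw [hψ x hx, hψ₂ x _ hx hm, hψ₂_eq, hψ₁_eq x hx,
      setIntegral_congr_fun measurableSet_Ioo fun _ hu =>
        lomaxQuantile_add_one_rpow_eq_exp hγ hx r hu]
  have hanti : StrictAntiOn ψ (Ioi 0) := fun x₁ hx₁ x₂ hx₂ hx => by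
    rw [hψ_eq x₁ hx₁, hψ_eq x₂ hx₂]
    exact sub_lt_sub_right (integral_exp_mul_normalizedLog_lt hγ hr hx₁ hx) _
  have hone : ψ 1 = 0 := by
    rw [hψ_eq 1 one_pos, integral_exp_mul_normalizedLog_one hγ (by linarith), sub_self]
  exact ⟨hanti, fun x hx =>
    ⟨fun h => hanti.injOn hx (mem_Ioi.2 one_pos) (h.trans hone.symm), fun h => h ▸ hone⟩⟩
end
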